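/- arXiv:math/0611681 — 3 statements merged into one kernel-verified Lean document; each statement's English description precedes it below -/
import Mathlib

section
/- For every positive integer m and every x ∈ ℝ, the series ∑_{j∈ℤ} φ_{m,j}(x)² converges and equals m, where φ_{m,j}(x) = √m·φ(mx − j) and φ(x) = sin(πx)/(πx). -/
open Real hiding sinc
open MeasureTheory intervalIntegral
open scoped Real ComplexConjugate

/-- The cardinal sine `φ(x) = sin(πx)/(πx)` (with `φ(0) = 1`). -/
noncomputable def sinc (x : ℝ) : ℝ :=
  if x = 0 then 1 else Real.sin (Real.pi * x) / (Real.pi * x)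

/-- `φ_{m,j}(x) = √m · φ(mx − j)`. -/
noncomputable def phimj (m : ℕ) (j : ℤ) (x : ℝ) : ℝ :=
  Real.sqrt m * sinc (m * x - j)

lemma integral_exp_eq_sinc (a : ℝ) :
    ∫ t in (-(1:ℝ)/2)..(1/2), Complex.exp (2 * π * a * t * Complex.I) = (sinc a : ℂ) := by
  by_cases ha : a = 0
  · simp only [ha, Complex.ofReal_zero, mul_zero, zero_mul, Complex.exp_zero]
    rw [intervalIntegral.integral_const]
    norm_num [sinc]
  · have hc : (2 * (π:ℂ) * a * Complex.I) ≠ 0 := by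
      simp [Real.pi_ne_zero, ha, Complex.I_ne_zero, Complex.ofReal_ne_zero]
    have h1 : ∀ t : ℝ, (2 * (π:ℂ) * a * t * Complex.I)
        = (2 * (π:ℂ) * a * Complex.I) * t := by intro t; ring
    simp_rw [h1]
    rw [integral_exp_mul_complex hc]
    have hπa : ((π:ℂ) * a) ≠ 0 := by
      simp [Real.pi_ne_zero, ha, Complex.ofReal_ne_zero]
    have e1 : (2 * (π:ℂ) * a * Complex.I) * ((1:ℝ)/2 : ℝ) = ((π:ℂ) * a) * Complex.I := by
      push_cast; ring
    have e2 : (2 * (π:ℂ) * a * Complex.I) * ((-(1:ℝ)/2 : ℝ)) = (-((π:ℂ) * a)) * Complex.I := by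
      push_cast; ring
    rw [e1, e2, Complex.exp_mul_I, Complex.exp_mul_I, Complex.cos_neg, Complex.sin_neg]
    have : ((π:ℂ) * a) = ((π * a : ℝ) : ℂ) := by push_cast; ring
    rw [this, ← Complex.ofReal_sin]
    rw [sinc, if_neg ha]
    field_simp
    push_cast
    have hπ : (π:ℂ) ≠ 0 := by exact_mod_cast Real.pi_ne_zero
    field_simp
    ring

lemma hasSum_sinc_sq (y : ℝ) : HasSum (fun j : ℤ => sinc (y - j) ^ 2) 1 := by
  haveI : Fact (0 < (1:ℝ)) := ⟨one_pos⟩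
  set g : ℝ → ℂ := fun t => Complex.exp (2 * π * y * t * Complex.I) with hg_def
  set G : AddCircle (1:ℝ) → ℂ := AddCircle.liftIoc 1 (-(1:ℝ)/2) g with hG_def
  have hnorm : ∀ z, ‖G z‖ = 1 := by
    intro z
    simp only [hG_def, AddCircle.liftIoc, Function.comp_apply, Set.restrict_apply, hg_def]
    rw [Complex.norm_exp]
    norm_num [Complex.mul_re, Complex.I_re, Complex.I_im]
  have hmeas : Measurable G := by
    have h1 : Measurable (⇑(AddCircle.equivIoc 1 (-(1:ℝ)/2))) :=
      (AddCircle.measurableEquivIoc 1 (-(1:ℝ)/2)).measurable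
    have h2 : Measurable g := by fun_prop
    exact (h2.comp measurable_subtype_coe).comp h1
  have hmem : MemLp G 2 AddCircle.haarAddCircle :=
    MemLp.of_bound hmeas.aestronglyMeasurable 1 (Filter.Eventually.of_forall fun z => (hnorm z).le)
  set F : Lp ℂ 2 (AddCircle.haarAddCircle (T := 1)) := hmem.toLp G with hF_def
  -- Fourier coefficients
  have hcoeffG : ∀ n : ℤ, fourierCoeff G n = (sinc (y - n) : ℂ) := by
    intro n
    rw [fourierCoeff_eq_intervalIntegral G n (-(1:ℝ)/2)]
    have hint : ∫ t in (-(1:ℝ)/2)..(-(1:ℝ)/2 + 1), (@fourier 1 (-n) (↑t : AddCircle (1:ℝ))) • G ↑t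
        = ∫ t in (-(1:ℝ)/2)..(1/2), Complex.exp (2 * π * (y - n) * t * Complex.I) := by
      rw [show (-(1:ℝ)/2 + 1) = 1/2 by norm_num]
      apply intervalIntegral.integral_congr_ae
      have hle : (-(1:ℝ)/2) ≤ 1/2 := by norm_num
      rw [Set.uIoc_of_le hle]
      filter_upwards [] with t
      intro ht
      have htmem : t ∈ Set.Ioc (-(1:ℝ)/2) (-(1:ℝ)/2 + 1) := by
        constructor
        · exact ht.1
        · linarith [ht.2]
      rw [hG_def, AddCircle.liftIoc_coe_apply htmem, fourier_coe_apply]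
      rw [smul_eq_mul, hg_def, ← Complex.exp_add]
      push_cast
      ring_nf
    rw [hint]
    have h5 : ∀ t : ℝ, (2 * (π:ℂ) * ((y:ℂ) - (n:ℂ)) * t * Complex.I)
        = (2 * (π:ℂ) * (((y - n : ℝ)):ℂ) * t * Complex.I) := by
      intro t; push_cast; ring
    simp_rw [h5]
    rw [integral_exp_eq_sinc]
    norm_num
  have hcoeffF : ∀ n : ℤ, fourierCoeff (⇑F) n = (sinc (y - n) : ℂ) := by
    intro n
    rw [← hcoeffG n]
    unfold fourierCoeff
    apply MeasureTheory.integral_congr_ae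
    filter_upwards [hmem.coeFn_toLp] with z hz
    rw [hz]
  -- inner F F = 1
  have hinner : @inner ℂ _ _ F F = (1 : ℂ) := by
    rw [MeasureTheory.L2.inner_def]
    have : ∀ᵐ z ∂(AddCircle.haarAddCircle (T := 1)),
        @inner ℂ _ _ (F z) (F z) = (1 : ℂ) := by
      filter_upwards [hmem.coeFn_toLp] with z hz
      rw [hz, RCLike.inner_apply, Complex.mul_conj]
      have := hnorm z
      rw [Complex.normSq_eq_norm_sq, this]
      norm_num
    rw [integral_congr_ae this]
    simp
  -- Parseval
  have hP := (fourierBasis (T := 1)).hasSum_inner_mul_inner F F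
  have hrepr : ∀ i : ℤ, @inner ℂ _ _ ((fourierBasis (T := 1)) i) F = (sinc (y - i) : ℂ) := by
    intro i
    rw [← HilbertBasis.repr_apply_apply, fourierBasis_repr, hcoeffF]
  have hP2 : HasSum (fun i : ℤ => ((sinc (y - i) : ℂ)) ^ 2) (1 : ℂ) := by
    rw [← hinner]
    convert hP using 3 with i
    · rfl
    rw [← hrepr i, ← inner_conj_symm F ((fourierBasis (T := 1)) i)]
    rw [hrepr i, Complex.conj_ofReal]
    ring
  have h3 : HasSum (fun i : ℤ => ((sinc (y - i) ^ 2 : ℝ) : ℂ)) (((1:ℝ) : ℂ)) := by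
    push_cast; exact hP2
  exact Complex.hasSum_ofReal.mp h3

theorem stmt4 (m : ℕ) (hm : 0 < m) (x : ℝ) :
    HasSum (fun j : ℤ => phimj m j x ^ 2) (m : ℝ) := by
  have h2 := (hasSum_sinc_sq (m * x)).mul_left (m : ℝ)
  rw [mul_one] at h2
  convert h2 using 3 with j
  · rfl
  rw [phimj, mul_pow, Real.sq_sqrt (Nat.cast_nonneg m)]
end

section
/- Let q be a probability density on ℝ with Fourier transform q*, and suppose there exist s ≥ 0, b > 0, γ ∈ ℝ (with γ > 0 if s = 0) and k₀ > 0 such that |q*(x)| ≥ k₀(x²+1)^{−γ/2} exp(−b|x|^s) for all x. Then there exists a constant c₂ > 0, depending only on k₀, γ, b, s, such that for every positive integer m, Δ₂(m) = (1/4π²)∫_{−πm}^{πm} |q*(u)|^{−4} du ≤ c₂ (πm)^{4γ+1−s} e^{4b(πm)^s}. -/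
open MeasureTheory

/-- Fourier transform `t*(u) = ∫ e^{-ixu} t(x) dx` of a real-valued function on `ℝ`. -/
noncomputable def ft1 (t : ℝ → ℝ) (u : ℝ) : ℂ :=
  ∫ x : ℝ, Complex.exp (-(Complex.I * x * u)) * t x

/-- `Δ₂(m) = (1/4π²) ∫_{−πm}^{πm} |q*(u)|⁻⁴ du`. -/
noncomputable def Delta2 (q : ℝ → ℝ) (m : ℕ) : ℝ :=
  (4 * Real.pi ^ 2)⁻¹ *
    ∫ u in Set.Icc (-(Real.pi * m)) (Real.pi * m), (‖ft1 q u‖ ^ 4)⁻¹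


lemma cont_h (s b γ : ℝ) (hs : 0 ≤ s) :
    Continuous (fun u : ℝ => (u ^ 2 + 1) ^ (2 * γ) * Real.exp (4 * b * |u| ^ s)) := by
  apply Continuous.mul
  · apply continuous_iff_continuousAt.mpr
    intro u
    exact (Real.continuousAt_rpow_const _ _ (Or.inl (by positivity))).comp
      (by continuity : Continuous fun u : ℝ => u ^ 2 + 1).continuousAt
  · exact Real.continuous_exp.comp
      (continuous_const.mul ((Real.continuous_rpow_const hs).comp continuous_abs))

lemma kappa_T0 (s b γ : ℝ) (hs : 0 ≤ s) (hb : 0 < b) (hγ : s = 0 → 0 < γ) :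
    ∃ κ T₀ : ℝ, 0 < κ ∧ Real.pi ≤ T₀ ∧
      ∀ u : ℝ, T₀ ≤ u → κ * u ^ s ≤ (4 * γ + 1 - s) + 4 * b * s * u ^ s := by
  rcases eq_or_lt_of_le hs with hs0 | hs0
  · refine ⟨4 * γ + 1, Real.pi, by have := hγ hs0.symm; linarith, le_refl _, fun u hu => ?_⟩
    rw [← hs0, Real.rpow_zero]
    ring_nf
    nlinarith [hγ hs0.symm]
  · set R := max ((s - 4 * γ - 1) / (2 * b * s)) 0 with hR
    refine ⟨2 * b * s, max Real.pi (R ^ s⁻¹), by positivity, le_max_left _ _, fun u hu => ?_⟩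
    have hRu : R ≤ u ^ s := by
      have h1 : R ^ s⁻¹ ≤ u := le_trans (le_max_right _ _) hu
      have h0 : (0:ℝ) ≤ R ^ s⁻¹ := Real.rpow_nonneg (le_max_right _ _) _
      calc R = (R ^ s⁻¹) ^ s :=
              (Real.rpow_inv_rpow (le_max_right _ _) hs0.ne').symm
        _ ≤ u ^ s := Real.rpow_le_rpow h0 h1 hs
    have h2 : s - 4 * γ - 1 ≤ 2 * b * s * u ^ s := by
      have : (s - 4 * γ - 1) / (2 * b * s) ≤ u ^ s := le_trans (le_max_left _ _) hRu
      rw [div_le_iff₀ (by positivity)] at this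
      linarith [this]
    nlinarith [Real.rpow_nonneg (abs_nonneg u) s]

lemma main_bound (s b γ : ℝ) (hs : 0 ≤ s) (hb : 0 < b) (hγ : s = 0 → 0 < γ) :
    ∃ C : ℝ, 0 < C ∧ ∀ T : ℝ, Real.pi ≤ T →
      (∫ u in Set.Icc (-T) T, (u ^ 2 + 1) ^ (2 * γ) * Real.exp (4 * b * |u| ^ s))
        ≤ C * (T ^ (4 * γ + 1 - s) * Real.exp (4 * b * T ^ s)) := by
  obtain ⟨κ, T₀, hκ, hT₀, hκT⟩ := kappa_T0 s b γ hs hb hγ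
  have hπ1 : (1:ℝ) ≤ Real.pi := by linarith [Real.pi_gt_three]
  have hT₀pos : 0 < T₀ := lt_of_lt_of_le Real.pi_pos hT₀
  set h : ℝ → ℝ := fun u => (u ^ 2 + 1) ^ (2 * γ) * Real.exp (4 * b * |u| ^ s) with hh
  have hcont : Continuous h := cont_h s b γ hs
  have hhnn : ∀ u, 0 ≤ h u := fun u => by
    rw [hh]; exact mul_nonneg (Real.rpow_nonneg (by positivity) _) (Real.exp_nonneg _)
  have hint : ∀ a c : ℝ, IntervalIntegrable h volume a c :=
    fun a c => hcont.intervalIntegrable a c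
  set cγ : ℝ := max ((2:ℝ) ^ (2 * γ)) 1 with hcγdef
  have hcγ : 0 < cγ := lt_of_lt_of_le one_pos (le_max_right _ _)
  have hhub : ∀ u : ℝ, 1 ≤ u → h u ≤ cγ * u ^ (4 * γ) * Real.exp (4 * b * u ^ s) := by
    intro u hu
    have hu0 : (0:ℝ) < u := by linarith
    have habs : |u| = u := abs_of_nonneg hu0.le
    have h4 : (u:ℝ) ^ (4 * γ) = ((u:ℝ) ^ 2) ^ (2 * γ) := by
      rw [← Real.rpow_natCast u 2, ← Real.rpow_mul hu0.le]
      congr 1; ring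
    have key : (u ^ 2 + 1 : ℝ) ^ (2 * γ) ≤ cγ * u ^ (4 * γ) := by
      rcases le_or_gt 0 γ with hγ0 | hγ0
      · calc (u ^ 2 + 1 : ℝ) ^ (2 * γ) ≤ (2 * u ^ 2) ^ (2 * γ) :=
              Real.rpow_le_rpow (by positivity) (by nlinarith) (by positivity)
          _ = 2 ^ (2 * γ) * (u ^ 2) ^ (2 * γ) := Real.mul_rpow (by norm_num) (by positivity)
          _ ≤ cγ * u ^ (4 * γ) := by
              rw [h4]
              exact mul_le_mul_of_nonneg_right (le_max_left _ _)
                (Real.rpow_nonneg (by positivity) _)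
      · calc (u ^ 2 + 1 : ℝ) ^ (2 * γ) ≤ (u ^ 2) ^ (2 * γ) :=
              Real.rpow_le_rpow_of_nonpos (by positivity) (by linarith) (by linarith)
          _ = u ^ (4 * γ) := h4.symm
          _ ≤ cγ * u ^ (4 * γ) :=
              le_mul_of_one_le_left (Real.rpow_nonneg hu0.le _) (le_max_right _ _)
    rw [hh]
    simp only [habs]
    exact mul_le_mul_of_nonneg_right key (Real.exp_nonneg _)
  set F : ℝ → ℝ := fun T => T ^ (4 * γ + 1 - s) * Real.exp (4 * b * T ^ s) with hF
  set Fd : ℝ → ℝ := fun u => (4 * γ + 1 - s) * u ^ (4 * γ + 1 - s - 1) * Real.exp (4 * b * u ^ s)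
      + u ^ (4 * γ + 1 - s) * (Real.exp (4 * b * u ^ s) * (4 * b * (s * u ^ (s - 1)))) with hFd
  have hFpos : ∀ T : ℝ, 0 < T → 0 < F T := fun T hT =>
    mul_pos (Real.rpow_pos_of_pos hT _) (Real.exp_pos _)
  have hderiv : ∀ u : ℝ, 0 < u → HasDerivAt F (Fd u) u := by
    intro u hu
    have h1 : HasDerivAt (fun x : ℝ => x ^ (4 * γ + 1 - s))
        ((4 * γ + 1 - s) * u ^ (4 * γ + 1 - s - 1)) u :=
      Real.hasDerivAt_rpow_const (Or.inl hu.ne')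
    have h2 : HasDerivAt (fun x : ℝ => 4 * b * x ^ s) (4 * b * (s * u ^ (s - 1))) u :=
      (Real.hasDerivAt_rpow_const (p := s) (Or.inl hu.ne')).const_mul (4 * b)
    exact h1.mul h2.exp
  have hFdcont : ContinuousOn Fd (Set.Ici T₀) := by
    intro u hu
    have hu0 : u ≠ 0 := (lt_of_lt_of_le hT₀pos hu).ne'
    have ce : ContinuousAt (fun x : ℝ => Real.exp (4 * b * x ^ s)) u :=
      Real.continuous_exp.continuousAt.comp
        (continuousAt_const.mul (Real.continuousAt_rpow_const _ _ (Or.inl hu0)))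
    exact (((continuousAt_const.mul
        (Real.continuousAt_rpow_const _ _ (Or.inl hu0))).mul ce).add
      ((Real.continuousAt_rpow_const _ _ (Or.inl hu0)).mul
        (ce.mul (continuousAt_const.mul (continuousAt_const.mul
          (Real.continuousAt_rpow_const _ _ (Or.inl hu0))))))).continuousWithinAt
  set A : ℝ := cγ / κ with hAdef
  have hA : 0 < A := div_pos hcγ hκ
  have hptw : ∀ u : ℝ, T₀ ≤ u → h u ≤ A * Fd u := by
    intro u hu
    have hu0 : 0 < u := lt_of_lt_of_le hT₀pos hu
    have hu1 : (1:ℝ) ≤ u := le_trans (le_trans hπ1 hT₀) hu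
    have hupow : u ^ s * u ^ (4 * γ - s) = u ^ (4 * γ) := by
      rw [← Real.rpow_add hu0]; congr 1; ring
    have hFdeq : Fd u = ((4 * γ + 1 - s) * u ^ (4 * γ - s) + 4 * b * s * u ^ (4 * γ))
        * Real.exp (4 * b * u ^ s) := by
      rw [hFd]
      simp only
      have e1 : u ^ (4 * γ + 1 - s - 1) = u ^ (4 * γ - s) := by congr 1; ring
      have e2 : u ^ (4 * γ + 1 - s) * u ^ (s - 1) = u ^ (4 * γ) := by
        rw [← Real.rpow_add hu0]; congr 1; ring
      rw [e1, show u ^ (4 * γ + 1 - s) * (Real.exp (4 * b * u ^ s) * (4 * b * (s * u ^ (s - 1))))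
        = 4 * b * s * (u ^ (4 * γ + 1 - s) * u ^ (s - 1)) * Real.exp (4 * b * u ^ s) by ring, e2]
      ring
    have hbr : κ * u ^ (4 * γ) ≤ (4 * γ + 1 - s) * u ^ (4 * γ - s) + 4 * b * s * u ^ (4 * γ) := by
      have h5 : (0:ℝ) ≤ u ^ (4 * γ - s) := Real.rpow_nonneg hu0.le _
      have h6 := mul_le_mul_of_nonneg_right (hκT u hu) h5
      have h7 : κ * u ^ s * u ^ (4 * γ - s) = κ * u ^ (4 * γ) := by
        rw [← hupow]; ring
      have h8 : (4 * γ + 1 - s + 4 * b * s * u ^ s) * u ^ (4 * γ - s)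
          = (4 * γ + 1 - s) * u ^ (4 * γ - s) + 4 * b * s * u ^ (4 * γ) := by
        rw [← hupow]; ring
      rw [h7, h8] at h6
      exact h6
    calc h u ≤ cγ * u ^ (4 * γ) * Real.exp (4 * b * u ^ s) := hhub u hu1
      _ = A * (κ * u ^ (4 * γ)) * Real.exp (4 * b * u ^ s) := by
          have hAκ : A * κ = cγ := div_mul_cancel₀ _ hκ.ne'
          rw [← hAκ]; ring
      _ ≤ A * ((4 * γ + 1 - s) * u ^ (4 * γ - s) + 4 * b * s * u ^ (4 * γ))
            * Real.exp (4 * b * u ^ s) := by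
          apply mul_le_mul_of_nonneg_right _ (Real.exp_nonneg _)
          exact mul_le_mul_of_nonneg_left hbr hA.le
      _ = A * Fd u := by rw [hFdeq]; ring
  have hFd0 : ∀ u : ℝ, T₀ ≤ u → 0 ≤ Fd u := by
    intro u hu
    have := le_trans (hhnn u) (hptw u hu)
    nlinarith
  have hFTC : ∀ T : ℝ, T₀ ≤ T → ∫ u in T₀..T, Fd u = F T - F T₀ := by
    intro T hT
    apply intervalIntegral.integral_eq_sub_of_hasDerivAt
    · intro u hu
      rw [Set.uIcc_of_le hT] at hu
      exact hderiv u (lt_of_lt_of_le hT₀pos hu.1)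
    · exact (hFdcont.mono (by rw [Set.uIcc_of_le hT]; exact Set.Icc_subset_Ici_self)).intervalIntegrable
  set M₀ : ℝ := (T₀ ^ 2 + 1) ^ (2 * |γ|) * Real.exp (4 * b * T₀ ^ s) with hM₀def
  have hM₀pos : 0 < M₀ := mul_pos (Real.rpow_pos_of_pos (by positivity) _) (Real.exp_pos _)
  have hM : ∀ u : ℝ, |u| ≤ T₀ → h u ≤ M₀ := by
    intro u hu
    have hu2 : u ^ 2 ≤ T₀ ^ 2 := by
      rw [← sq_abs]
      exact pow_le_pow_left₀ (abs_nonneg u) hu 2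
    rw [hh, hM₀def]
    apply mul_le_mul _ _ (Real.exp_nonneg _) (Real.rpow_nonneg (by positivity) _)
    · calc (u ^ 2 + 1 : ℝ) ^ (2 * γ) ≤ (u ^ 2 + 1) ^ (2 * |γ|) :=
          Real.rpow_le_rpow_of_exponent_le (by nlinarith) (by nlinarith [le_abs_self γ])
        _ ≤ (T₀ ^ 2 + 1) ^ (2 * |γ|) :=
          Real.rpow_le_rpow (by positivity) (by linarith) (by positivity)
    · exact Real.exp_le_exp.mpr (mul_le_mul_of_nonneg_left
        (Real.rpow_le_rpow (abs_nonneg _) hu hs) (by positivity))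
  have hFcont : ContinuousOn F (Set.Icc Real.pi T₀) := by
    intro u hu
    have hu0 : u ≠ 0 := (lt_of_lt_of_le Real.pi_pos hu.1).ne'
    exact ((Real.continuousAt_rpow_const _ _ (Or.inl hu0)).mul
      (Real.continuous_exp.continuousAt.comp
        (continuousAt_const.mul
          (Real.continuousAt_rpow_const _ _ (Or.inl hu0))))).continuousWithinAt
  obtain ⟨u₀, hu₀, hmin⟩ := isCompact_Icc.exists_isMinOn
    (Set.nonempty_Icc.mpr hT₀) hFcont
  have hFminpos : 0 < F u₀ := hFpos u₀ (lt_of_lt_of_le Real.pi_pos hu₀.1)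
  have hFlow : ∀ T : ℝ, Real.pi ≤ T → F u₀ ≤ F T := by
    intro T hT
    rcases le_total T T₀ with h1 | h1
    · exact hmin ⟨hT, h1⟩
    · have h4 : 0 ≤ ∫ u in T₀..T, Fd u :=
        intervalIntegral.integral_nonneg h1 (fun u hu => hFd0 u hu.1)
      have h3 := hFTC T h1
      have h5 : F u₀ ≤ F T₀ := hmin ⟨hT₀, le_refl _⟩
      linarith
  refine ⟨2 * (T₀ * M₀ / F u₀ + A), by positivity, ?_⟩
  intro T hT
  have hT0T : 0 < T := lt_of_lt_of_le Real.pi_pos hT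
  have hconst : ∀ a c : ℝ, 0 ≤ a → c ≤ T₀ → a ≤ c → (∫ u in a..c, h u) ≤ (c - a) * M₀ := by
    intro a c ha hc hac
    have : (∫ u in a..c, h u) ≤ ∫ u in a..c, M₀ :=
      intervalIntegral.integral_mono_on hac (hint a c) intervalIntegrable_const
        (fun x hx => hM x (by rw [abs_of_nonneg (le_trans ha hx.1)]; linarith [hx.2]))
    rwa [intervalIntegral.integral_const, smul_eq_mul] at this
  have hhalf : (∫ u in (0:ℝ)..T, h u) ≤ T₀ * M₀ + A * F T := by
    rcases le_total T T₀ with h1 | h1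
    · have h2 := hconst 0 T (le_refl _) h1 hT0T.le
      have hAF : 0 ≤ A * F T := mul_nonneg hA.le (hFpos T hT0T).le
      nlinarith
    · rw [← intervalIntegral.integral_add_adjacent_intervals (hint 0 T₀) (hint T₀ T)]
      have p1 : (∫ u in (0:ℝ)..T₀, h u) ≤ T₀ * M₀ := by
        have := hconst 0 T₀ (le_refl _) (le_refl _) hT₀pos.le
        simpa using this
      have p2 : (∫ u in T₀..T, h u) ≤ A * F T := by
        have step : (∫ u in T₀..T, h u) ≤ ∫ u in T₀..T, A * Fd u := by
          apply intervalIntegral.integral_mono_on h1 (hint T₀ T)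
          · exact ((hFdcont.mono (by rw [Set.uIcc_of_le h1]; exact Set.Icc_subset_Ici_self)).intervalIntegrable).const_mul A
          · exact fun x hx => hptw x hx.1
        rw [intervalIntegral.integral_const_mul, hFTC T h1] at step
        nlinarith [hFpos T₀ hT₀pos]
      linarith
  have hsplit : (∫ u in Set.Icc (-T) T, h u) = 2 * ∫ u in (0:ℝ)..T, h u := by
    rw [MeasureTheory.integral_Icc_eq_integral_Ioc,
      ← intervalIntegral.integral_of_le (by linarith : -T ≤ T),
      ← intervalIntegral.integral_add_adjacent_intervals (hint (-T) 0) (hint 0 T)]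
    have heven : (∫ u in (-T)..(0:ℝ), h u) = ∫ u in (0:ℝ)..T, h u := by
      have := intervalIntegral.integral_comp_neg (a := (0:ℝ)) (b := T) (f := h)
      rw [neg_zero] at this
      rw [← this]
      apply intervalIntegral.integral_congr
      intro x hx
      rw [hh]
      simp [abs_neg, neg_pow]
    rw [heven]; ring
  rw [hsplit]
  have hbound : T₀ * M₀ ≤ T₀ * M₀ / F u₀ * F T := by
    rw [div_mul_eq_mul_div, le_div_iff₀ hFminpos]
    exact mul_le_mul_of_nonneg_left (hFlow T hT) (by positivity)
  calc 2 * ∫ u in (0:ℝ)..T, h u ≤ 2 * (T₀ * M₀ + A * F T) := by linarith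
    _ ≤ 2 * (T₀ * M₀ / F u₀ * F T + A * F T) := by linarith
    _ = 2 * (T₀ * M₀ / F u₀ + A) * F T := by ring

theorem stmt10 (q : ℝ → ℝ) (hq0 : ∀ x, 0 ≤ q x) (hqint : Integrable q)
    (hq1 : ∫ x : ℝ, q x = 1)
    (s b γ k₀ : ℝ) (hs : 0 ≤ s) (hb : 0 < b) (hγ : s = 0 → 0 < γ) (hk₀ : 0 < k₀)
    (hlow : ∀ x : ℝ,
      k₀ * (x ^ 2 + 1) ^ (-(γ / 2)) * Real.exp (-b * |x| ^ s) ≤ ‖ft1 q x‖) :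
    ∃ c₂ : ℝ, 0 < c₂ ∧ ∀ m : ℕ, 0 < m →
      Delta2 q m ≤ c₂ * (Real.pi * m) ^ (4 * γ + 1 - s) * Real.exp (4 * b * (Real.pi * m) ^ s) := by
  obtain ⟨C, hC, hCT⟩ := main_bound s b γ hs hb hγ
  refine ⟨(4 * Real.pi ^ 2)⁻¹ * k₀⁻¹ ^ 4 * C,
    by have := Real.pi_pos; positivity, ?_⟩
  intro m hm
  set T := Real.pi * (m : ℝ) with hTdef
  have hm1 : (1:ℝ) ≤ (m : ℝ) := by exact_mod_cast hm
  have hπT : Real.pi ≤ T := by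
    rw [hTdef]; nlinarith [Real.pi_pos]
  have key : (∫ u in Set.Icc (-T) T, (‖ft1 q u‖ ^ 4)⁻¹)
      ≤ ∫ u in Set.Icc (-T) T,
        k₀⁻¹ ^ 4 * ((u ^ 2 + 1) ^ (2 * γ) * Real.exp (4 * b * |u| ^ s)) := by
    apply integral_mono_of_nonneg
    · exact Filter.Eventually.of_forall fun u => by positivity
    · exact (continuous_const.mul (cont_h s b γ hs)).integrableOn_Icc
    · apply Filter.Eventually.of_forall
      intro u
      have hbase : (0:ℝ) < u ^ 2 + 1 := by positivity
      set φ : ℝ := k₀ * (u ^ 2 + 1) ^ (-(γ / 2)) * Real.exp (-b * |u| ^ s) with hφdef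
      have hφ : 0 < φ := by
        rw [hφdef]
        exact mul_pos (mul_pos hk₀ (Real.rpow_pos_of_pos hbase _)) (Real.exp_pos _)
      have h1 : φ ^ 4 ≤ ‖ft1 q u‖ ^ 4 := pow_le_pow_left₀ hφ.le (hlow u) 4
      have h2 : (‖ft1 q u‖ ^ 4)⁻¹ ≤ (φ ^ 4)⁻¹ := inv_anti₀ (by positivity) h1
      have hφ4 : φ ^ 4 = k₀ ^ 4 * ((u ^ 2 + 1) ^ (-(2 * γ)) * Real.exp (-(4 * b * |u| ^ s))) := by
        rw [hφdef, mul_pow, mul_pow, ← Real.rpow_natCast ((u ^ 2 + 1) ^ (-(γ / 2))) 4,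
          ← Real.rpow_mul hbase.le, ← Real.exp_nat_mul]
        norm_num
        rw [show -(γ / 2 * 4) = -(2 * γ) by ring,
          show -(4 * (b * |u| ^ s)) = -(4 * b * |u| ^ s) by ring]
        ring
      refine le_trans h2 (le_of_eq ?_)
      rw [hφ4, mul_inv, mul_inv, ← inv_pow, ← Real.rpow_neg hbase.le, neg_neg,
        Real.exp_neg, inv_inv]
  have hfin := hCT T hπT
  have hconst : (∫ u in Set.Icc (-T) T,
        k₀⁻¹ ^ 4 * ((u ^ 2 + 1) ^ (2 * γ) * Real.exp (4 * b * |u| ^ s)))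
      = k₀⁻¹ ^ 4 * ∫ u in Set.Icc (-T) T,
        (u ^ 2 + 1) ^ (2 * γ) * Real.exp (4 * b * |u| ^ s) :=
    integral_const_mul _ _
  have hπ2 : (0:ℝ) < (4 * Real.pi ^ 2)⁻¹ := by have := Real.pi_pos; positivity
  have step : Delta2 q m ≤ (4 * Real.pi ^ 2)⁻¹ * (k₀⁻¹ ^ 4 *
      (C * (T ^ (4 * γ + 1 - s) * Real.exp (4 * b * T ^ s)))) := by
    rw [Delta2]
    apply mul_le_mul_of_nonneg_left _ hπ2.le
    calc (∫ u in Set.Icc (-(Real.pi * (m:ℝ))) (Real.pi * (m:ℝ)), (‖ft1 q u‖ ^ 4)⁻¹)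
        ≤ k₀⁻¹ ^ 4 * ∫ u in Set.Icc (-T) T,
          (u ^ 2 + 1) ^ (2 * γ) * Real.exp (4 * b * |u| ^ s) := by
          rw [← hconst]; exact key
      _ ≤ k₀⁻¹ ^ 4 * (C * (T ^ (4 * γ + 1 - s) * Real.exp (4 * b * T ^ s))) := by
          apply mul_le_mul_of_nonneg_left hfin (by positivity)
  calc Delta2 q m ≤ (4 * Real.pi ^ 2)⁻¹ * (k₀⁻¹ ^ 4 *
      (C * (T ^ (4 * γ + 1 - s) * Real.exp (4 * b * T ^ s)))) := step
    _ = (4 * Real.pi ^ 2)⁻¹ * k₀⁻¹ ^ 4 * C * T ^ (4 * γ + 1 - s)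
        * Real.exp (4 * b * T ^ s) := by ring
end

section
/- Let q be a probability density on ℝ whose Fourier transform q* never vanishes, m a positive integer, and n a positive integer. For any real numbers y₁, …, y_{n+1}, ∑_{j,k∈ℤ} [ (1/n) ∑_{i=1}^n v_{φ_{m,j}}(y_i) v_{φ_{m,k}}(y_{i+1}) ]² ≤ Δ(m)², where Δ(m) = (1/2π)∫_{−πm}^{πm} |q*(u)|^{−2} du. -/
open MeasureTheory

/-- The Fourier transform of `φ_{m,j}` (where `φ_{m,j}(x) = √m sin(π(mx−j))/(π(mx−j))`),
namely `u ↦ (1/√m) e^{−iju/m} 1_{[−πm,πm]}(u)`. -/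
noncomputable def phimjstar (m : ℕ) (j : ℤ) : ℝ → ℂ :=
  (Set.Icc (-(Real.pi * m)) (Real.pi * m)).indicator
    fun u => ((Real.sqrt m)⁻¹ : ℝ) * Complex.exp (-(Complex.I * j * u / m))

/-- `v_{φ_{m,j}}`, the inverse Fourier transform of `φ_{m,j}*/q*(−·)` (a real-valued
function, here recovered as the real part). -/
noncomputable def vphi (q : ℝ → ℝ) (m : ℕ) (j : ℤ) (x : ℝ) : ℝ :=
  (((2 * Real.pi : ℝ) : ℂ)⁻¹ *
    ∫ u : ℝ, Complex.exp (Complex.I * x * u) * (phimjstar m j u / ft1 q (-u))).re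

/-- `Δ(m) = (1/2π) ∫_{−πm}^{πm} |q*(u)|⁻² du`. -/
noncomputable def Delta (q : ℝ → ℝ) (m : ℕ) : ℝ :=
  (2 * Real.pi)⁻¹ *
    ∫ u in Set.Icc (-(Real.pi * m)) (Real.pi * m), (‖ft1 q u‖ ^ 2)⁻¹

lemma ft1_continuous {q : ℝ → ℝ} (hqint : Integrable q) : Continuous (ft1 q) := by
  apply MeasureTheory.continuous_of_dominated (bound := fun x => |q x|)
  · intro u
    exact ((Complex.continuous_exp.comp (by continuity)).aestronglyMeasurable.mul
      (Complex.continuous_ofReal.comp_aestronglyMeasurable hqint.aestronglyMeasurable))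
  · intro u
    filter_upwards with x
    simp [Complex.norm_exp, mul_comm]
  · exact hqint.abs
  · filter_upwards with x
    exact (Complex.continuous_exp.comp (by fun_prop)).mul continuous_const

lemma ft1_neg {q : ℝ → ℝ} (x : ℝ) : ft1 q (-x) = starRingEnd ℂ (ft1 q x) := by
  rw [ft1, ft1, ← integral_conj]
  congr 1; ext v
  simp [← Complex.exp_conj, map_mul, Complex.conj_ofReal, mul_comm, mul_assoc, mul_left_comm]

lemma norm_ft1_neg {q : ℝ → ℝ} (x : ℝ) : ‖ft1 q (-x)‖ = ‖ft1 q x‖ := by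
  rw [ft1_neg]; exact RCLike.norm_conj _

open Complex Real Set AddCircle in
lemma key (q : ℝ → ℝ) (hqint : Integrable q) (hqne : ∀ u, ft1 q u ≠ 0) (m : ℕ) (hm : 0 < m)
    (x : ℝ) :
    Summable (fun j : ℤ => vphi q m j x ^ 2) ∧ ∑' j : ℤ, vphi q m j x ^ 2 ≤ Delta q m := by
  have hπ := Real.pi_pos
  have hm' : (0:ℝ) < m := by exact_mod_cast hm
  set b : ℝ := Real.pi * m with hb_def
  have hb : 0 < b := mul_pos hπ hm'
  set T : ℝ := b - -b with hT_def
  have hT : 0 < T := by simp [hT_def]; linarith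
  haveI : Fact (0 < T) := ⟨hT⟩
  have hbb : -b + T = b := by rw [hT_def]; ring
  have hTc : (T : ℂ) = 2 * (Real.pi : ℂ) * (m : ℂ) := by
    rw [hT_def, hb_def]; push_cast; ring
  set F : ℝ → ℂ := fun u => Complex.exp (Complex.I * x * u) / ft1 q (-u) with hF_def
  have hqc : Continuous (ft1 q) := ft1_continuous hqint
  have hFc : Continuous F := by
    apply Continuous.div
    · exact Complex.continuous_exp.comp (by fun_prop)
    · exact hqc.comp continuous_neg
    · exact fun u => hqne (-u)
  set G : AddCircle T → ℂ := AddCircle.liftIoc T (-b) F with hG_def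
  -- Step 1: vphi is the real part of √m * fourierCoeff G j
  have step1 : ∀ j : ℤ, vphi q m j x = ((Real.sqrt m : ℂ) * fourierCoeff G j).re := by
    intro j
    have hcoeff : fourierCoeff G j
        = (1 / T : ℝ) • ∫ u in Set.Ioc (-b) b, Complex.exp (-(Complex.I * j * u / m)) * F u := by
      rw [hG_def]
      rw [fourierCoeff_eq_intervalIntegral (AddCircle.liftIoc T (-b) F) j (-b)]
      rw [hbb]
      rw [intervalIntegral.integral_of_le (show -b ≤ b by linarith)]
      congr 1
      refine setIntegral_congr_fun measurableSet_Ioc fun u hu => ?_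
      have hu' : u ∈ Set.Ioc (-b) (-b + T) := by rwa [hbb]
      rw [AddCircle.liftIoc_coe_apply hu', fourier_coe_apply, smul_eq_mul]
      congr 1
      rw [hTc]
      push_cast
      have : (Real.pi : ℂ) ≠ 0 := by exact_mod_cast Real.pi_ne_zero
      have hmc : (m : ℂ) ≠ 0 := by exact_mod_cast hm'.ne'
      field_simp
    have hint : (∫ u : ℝ, Complex.exp (Complex.I * x * u) * (phimjstar m j u / ft1 q (-u)))
        = ((Real.sqrt m : ℂ))⁻¹ *
          ∫ u in Set.Ioc (-b) b, Complex.exp (-(Complex.I * j * u / m)) * F u := by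
      have heq : ∀ u : ℝ, Complex.exp (Complex.I * x * u) * (phimjstar m j u / ft1 q (-u))
          = Set.indicator (Set.Icc (-b) b)
              (fun u => ((Real.sqrt m : ℂ))⁻¹ *
                (Complex.exp (-(Complex.I * j * u / m)) * F u)) u := by
        intro u
        rw [phimjstar]
        by_cases h : u ∈ Set.Icc (-b) b
        · rw [Set.indicator_of_mem h, Set.indicator_of_mem h, hF_def]
          push_cast
          ring
        · rw [Set.indicator_of_notMem h, Set.indicator_of_notMem h]
          simp
      rw [integral_congr_ae (Filter.Eventually.of_forall heq), integral_indicator measurableSet_Icc,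
        MeasureTheory.integral_Icc_eq_integral_Ioc, MeasureTheory.integral_const_mul]
    rw [vphi, hint, hcoeff]
    set A : ℂ := ∫ u in Set.Ioc (-b) b, Complex.exp (-(Complex.I * j * u / m)) * F u with hA_def
    congr 1
    have hsq : (Real.sqrt m : ℂ) * (Real.sqrt m : ℂ) = (m : ℂ) := by
      exact_mod_cast congrArg (Complex.ofReal) (Real.mul_self_sqrt (Nat.cast_nonneg m))
    have hsm : (Real.sqrt (m:ℝ) : ℂ) ≠ 0 := by
      have := ne_of_gt (Real.sqrt_pos.2 hm')
      exact_mod_cast this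
    have hpc : (Real.pi : ℂ) ≠ 0 := by exact_mod_cast Real.pi_ne_zero
    have hmc : (m : ℂ) ≠ 0 := by exact_mod_cast hm'.ne'
    rw [Complex.real_smul]
    push_cast
    rw [hTc]
    field_simp
    linear_combination (-A) * hsq
  -- boundedness of F on the interval
  obtain ⟨u₀, hu₀mem, hu₀min⟩ :
      ∃ u₀ ∈ Set.Icc (-b) b, ∀ u ∈ Set.Icc (-b) b, ‖ft1 q u₀‖ ≤ ‖ft1 q u‖ :=
    by
      obtain ⟨u₀, hmem, hmin⟩ := isCompact_Icc.exists_isMinOn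
        (⟨-b, by constructor <;> linarith⟩ : (Set.Icc (-b) b).Nonempty)
        hqc.norm.continuousOn
      exact ⟨u₀, hmem, fun u hu => hmin hu⟩
  set ε : ℝ := ‖ft1 q u₀‖ with hε_def
  have hε : 0 < ε := norm_pos_iff.2 (hqne u₀)
  have hFnorm : ∀ u : ℝ, ‖F u‖ = ‖ft1 q u‖⁻¹ := by
    intro u
    rw [hF_def]
    simp [norm_div, Complex.norm_exp, ← norm_ft1_neg (q := q) u]
  have hGb : ∀ z : AddCircle T, ‖G z‖ ≤ ε⁻¹ := by
    intro z
    have hmem := (AddCircle.equivIoc T (-b) z).2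
    show ‖F ((AddCircle.equivIoc T (-b) z : Set.Ioc (-b) (-b + T)) : ℝ)‖ ≤ ε⁻¹
    set u : ℝ := ((AddCircle.equivIoc T (-b) z : Set.Ioc (-b) (-b + T)) : ℝ)
    have hmem' : u ∈ Set.Ioc (-b) b := by rwa [hbb] at hmem
    rw [hFnorm u]
    have hle : ε ≤ ‖ft1 q u‖ := hu₀min u ⟨hmem'.1.le, hmem'.2⟩
    exact inv_anti₀ hε hle
  have hGmeas : Measurable G :=
    (hFc.measurable.comp measurable_subtype_coe).comp
      (AddCircle.measurableEquivIoc T (-b)).measurable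
  have hG2 : MemLp G 2 AddCircle.haarAddCircle :=
    MemLp.of_bound hGmeas.aestronglyMeasurable ε⁻¹ (Filter.Eventually.of_forall hGb)
  set fL : Lp ℂ 2 (@AddCircle.haarAddCircle T ⟨hT⟩) := hG2.toLp G with hfL_def
  have hcoe : (fL : AddCircle T → ℂ) =ᵐ[AddCircle.haarAddCircle] G := hG2.coeFn_toLp
  have hc : ∀ i : ℤ, fourierCoeff (fL : AddCircle T → ℂ) i = fourierCoeff G i := fun i =>
    integral_congr_ae (hcoe.mono fun t ht => by simp only [ht])
  have hnormint : ∫ t, ‖(fL : AddCircle T → ℂ) t‖ ^ 2 ∂AddCircle.haarAddCircle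
      = ∫ t, ‖G t‖ ^ 2 ∂AddCircle.haarAddCircle :=
    integral_congr_ae (hcoe.mono fun t ht => by simp only [ht])
  have parseval := tsum_sq_fourierCoeff fL
  rw [hnormint] at parseval
  simp_rw [hc] at parseval
  -- parseval : ∑' i, ‖fourierCoeff G i‖ ^ 2 = ∫ t, ‖G t‖ ^ 2 ∂haarAddCircle
  have hsum : Summable fun i : ℤ => ‖fourierCoeff G i‖ ^ 2 := by
    have h2 := (lp.memℓp (fourierBasis.repr fL)).summable
      (p := (2 : ENNReal)) (by norm_num)
    simp only [fourierBasis_repr] at h2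
    have h3 : ∀ i : ℤ, ‖fourierCoeff (fL : AddCircle T → ℂ) i‖ ^ ((2:ENNReal)).toReal
        = ‖fourierCoeff G i‖ ^ 2 := by
      intro i
      rw [hc i]
      norm_num [Real.rpow_natCast]
    simpa only [h3] using h2
  -- compute the integral of ‖G‖²
  have hGint : ∫ t, ‖G t‖ ^ 2 ∂AddCircle.haarAddCircle
      = (1 / T) * ∫ u in Set.Ioc (-b) b, (‖ft1 q u‖ ^ 2)⁻¹ := by
    have h0 := fourierCoeff_eq_intervalIntegral
      (AddCircle.liftIoc T (-b) (fun u : ℝ => ((‖F u‖ ^ 2 : ℝ) : ℂ))) 0 (-b)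
    rw [hbb] at h0
    have hLHS : fourierCoeff (AddCircle.liftIoc T (-b) (fun u : ℝ => ((‖F u‖ ^ 2 : ℝ) : ℂ))) 0
        = ((∫ t, ‖G t‖ ^ 2 ∂AddCircle.haarAddCircle : ℝ) : ℂ) := by
      rw [fourierCoeff]
      simp only [neg_zero, fourier_zero, one_smul]
      rw [show (fun t : AddCircle T =>
          AddCircle.liftIoc T (-b) (fun u : ℝ => ((‖F u‖ ^ 2 : ℝ) : ℂ)) t)
          = fun t : AddCircle T => ((‖G t‖ ^ 2 : ℝ) : ℂ) from rfl]
      exact integral_ofReal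
    have hRHS : (∫ u in (-b)..b, fourier (-0) (u : AddCircle T) •
          AddCircle.liftIoc T (-b) (fun u : ℝ => ((‖F u‖ ^ 2 : ℝ) : ℂ)) ↑u)
        = ((∫ u in Set.Ioc (-b) b, (‖ft1 q u‖ ^ 2)⁻¹ : ℝ) : ℂ) := by
      rw [intervalIntegral.integral_of_le (show -b ≤ b by linarith)]
      rw [show (∫ u in Set.Ioc (-b) b, fourier (-0) (u : AddCircle T) •
          AddCircle.liftIoc T (-b) (fun u : ℝ => ((‖F u‖ ^ 2 : ℝ) : ℂ)) ↑u)
          = ∫ u in Set.Ioc (-b) b, (((‖ft1 q u‖ ^ 2)⁻¹ : ℝ) : ℂ) from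
        setIntegral_congr_fun measurableSet_Ioc fun u hu => by
          have hu' : u ∈ Set.Ioc (-b) (-b + T) := by rwa [hbb]
          rw [AddCircle.liftIoc_coe_apply hu']
          simp only [neg_zero, fourier_zero, one_smul]
          rw [hFnorm u, inv_pow]]
      exact integral_ofReal
    rw [hLHS, hRHS] at h0
    have := h0
    rw [Complex.real_smul] at this
    have h4 : ((∫ t, ‖G t‖ ^ 2 ∂AddCircle.haarAddCircle : ℝ) : ℂ)
        = (((1 / T) * ∫ u in Set.Ioc (-b) b, (‖ft1 q u‖ ^ 2)⁻¹ : ℝ) : ℂ) := by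
      rw [this]; push_cast; ring
    exact_mod_cast h4
  -- put everything together
  have hbound : ∀ j : ℤ, vphi q m j x ^ 2 ≤ (m : ℝ) * ‖fourierCoeff G j‖ ^ 2 := by
    intro j
    rw [step1 j]
    calc ((Real.sqrt m : ℂ) * fourierCoeff G j).re ^ 2
        ≤ ‖(Real.sqrt m : ℂ) * fourierCoeff G j‖ ^ 2 := by
          rw [← _root_.sq_abs]
          refine pow_le_pow_left₀ (abs_nonneg _) ?_ 2
          exact Complex.abs_re_le_norm _
      _ = (m : ℝ) * ‖fourierCoeff G j‖ ^ 2 := by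
          rw [norm_mul, mul_pow, Complex.norm_real, Real.norm_eq_abs, _root_.sq_abs,
            Real.sq_sqrt (Nat.cast_nonneg m)]
  have hsum' : Summable fun j : ℤ => (m : ℝ) * ‖fourierCoeff G j‖ ^ 2 := hsum.mul_left _
  have hsummable : Summable fun j : ℤ => vphi q m j x ^ 2 :=
    Summable.of_nonneg_of_le (fun j => sq_nonneg _) hbound hsum'
  refine ⟨hsummable, ?_⟩
  have hdelta : (m : ℝ) * ((1 / T) * ∫ u in Set.Ioc (-b) b, (‖ft1 q u‖ ^ 2)⁻¹) = Delta q m := by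
    rw [Delta, MeasureTheory.integral_Icc_eq_integral_Ioc]
    rw [hT_def, hb_def]
    have : Real.pi ≠ 0 := Real.pi_ne_zero
    field_simp
    ring
  calc ∑' j : ℤ, vphi q m j x ^ 2
      ≤ ∑' j : ℤ, (m : ℝ) * ‖fourierCoeff G j‖ ^ 2 := Summable.tsum_le_tsum hbound hsummable hsum'
    _ = (m : ℝ) * ∑' j : ℤ, ‖fourierCoeff G j‖ ^ 2 := tsum_mul_left
    _ = Delta q m := by rw [parseval, hGint, hdelta]

set_option maxHeartbeats 1000000 in
theorem stmt16 (q : ℝ → ℝ) (hq0 : ∀ x, 0 ≤ q x) (hqint : Integrable q)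
    (hq1 : ∫ x : ℝ, q x = 1) (hqne : ∀ u, ft1 q u ≠ 0)
    (m n : ℕ) (hm : 0 < m) (hn : 0 < n) (y : Fin (n + 1) → ℝ) :
    ∑' jk : ℤ × ℤ,
        ((n : ℝ)⁻¹ * ∑ i : Fin n, vphi q m jk.1 (y i.castSucc) * vphi q m jk.2 (y i.succ)) ^ 2
      ≤ Delta q m ^ 2 := by
  have key := fun x => key q hqint hqne m hm x
  have hn' : (0:ℝ) < n := by exact_mod_cast hn
  set A : ℤ → ℝ := fun j => (n : ℝ)⁻¹ * ∑ i : Fin n, vphi q m j (y i.castSucc) ^ 2 with hA_def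
  set B : ℤ → ℝ := fun k => (n : ℝ)⁻¹ * ∑ i : Fin n, vphi q m k (y i.succ) ^ 2 with hB_def
  have hA0 : ∀ j, 0 ≤ A j := fun j =>
    mul_nonneg (by positivity) (Finset.sum_nonneg fun i _ => sq_nonneg _)
  have hB0 : ∀ k, 0 ≤ B k := fun k =>
    mul_nonneg (by positivity) (Finset.sum_nonneg fun i _ => sq_nonneg _)
  have hAsum : Summable A :=
    ((summable_sum (fun i (_ : i ∈ Finset.univ) => (key (y i.castSucc)).1)).mul_left _)
  have hBsum : Summable B :=
    ((summable_sum (fun i (_ : i ∈ Finset.univ) => (key (y i.succ)).1)).mul_left _)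
  have hDelta0 : 0 ≤ Delta q m :=
    le_trans (tsum_nonneg fun j => sq_nonneg _) (key 0).2
  have hAt : ∑' j, A j ≤ Delta q m := by
    have h1 : ∑' j, A j = (n : ℝ)⁻¹ * ∑ i : Fin n, ∑' j, vphi q m j (y i.castSucc) ^ 2 := by
      rw [hA_def, tsum_mul_left]
      congr 1
      exact Summable.tsum_finsetSum (fun i _ => (key (y i.castSucc)).1)
    rw [h1]
    rw [inv_mul_le_iff₀ hn']
    calc ∑ i : Fin n, ∑' j, vphi q m j (y i.castSucc) ^ 2
        ≤ ∑ i : Fin n, Delta q m := Finset.sum_le_sum fun i _ => (key (y i.castSucc)).2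
      _ = n * Delta q m := by simp [mul_comm]
  have hBt : ∑' k, B k ≤ Delta q m := by
    have h1 : ∑' k, B k = (n : ℝ)⁻¹ * ∑ i : Fin n, ∑' k, vphi q m k (y i.succ) ^ 2 := by
      rw [hB_def, tsum_mul_left]
      congr 1
      exact Summable.tsum_finsetSum (fun i _ => (key (y i.succ)).1)
    rw [h1]
    rw [inv_mul_le_iff₀ hn']
    calc ∑ i : Fin n, ∑' k, vphi q m k (y i.succ) ^ 2
        ≤ ∑ i : Fin n, Delta q m := Finset.sum_le_sum fun i _ => (key (y i.succ)).2
      _ = n * Delta q m := by simp [mul_comm]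
  have hABsum : Summable (fun jk : ℤ × ℤ => A jk.1 * B jk.2) :=
    hAsum.mul_of_nonneg hBsum hA0 hB0
  have hpoint : ∀ jk : ℤ × ℤ,
      ((n : ℝ)⁻¹ * ∑ i : Fin n, vphi q m jk.1 (y i.castSucc) * vphi q m jk.2 (y i.succ)) ^ 2
      ≤ A jk.1 * B jk.2 := by
    intro jk
    rw [mul_pow, hA_def, hB_def]
    have hcs := Finset.sum_mul_sq_le_sq_mul_sq Finset.univ
      (fun i : Fin n => vphi q m jk.1 (y i.castSucc)) (fun i : Fin n => vphi q m jk.2 (y i.succ))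
    calc ((n : ℝ)⁻¹) ^ 2 * (∑ i : Fin n, vphi q m jk.1 (y i.castSucc) * vphi q m jk.2 (y i.succ)) ^ 2
        ≤ ((n : ℝ)⁻¹) ^ 2 * ((∑ i : Fin n, vphi q m jk.1 (y i.castSucc) ^ 2) *
            ∑ i : Fin n, vphi q m jk.2 (y i.succ) ^ 2) := by
          exact mul_le_mul_of_nonneg_left hcs (by positivity)
      _ = ((n : ℝ)⁻¹ * ∑ i : Fin n, vphi q m jk.1 (y i.castSucc) ^ 2) *
            ((n : ℝ)⁻¹ * ∑ i : Fin n, vphi q m jk.2 (y i.succ) ^ 2) := by ring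
  have hLsum : Summable (fun jk : ℤ × ℤ =>
      ((n : ℝ)⁻¹ * ∑ i : Fin n, vphi q m jk.1 (y i.castSucc) * vphi q m jk.2 (y i.succ)) ^ 2) :=
    Summable.of_nonneg_of_le (fun jk => sq_nonneg _) hpoint hABsum
  calc ∑' jk : ℤ × ℤ,
        ((n : ℝ)⁻¹ * ∑ i : Fin n, vphi q m jk.1 (y i.castSucc) * vphi q m jk.2 (y i.succ)) ^ 2
      ≤ ∑' jk : ℤ × ℤ, A jk.1 * B jk.2 := Summable.tsum_le_tsum hpoint hLsum hABsum
    _ = (∑' j, A j) * ∑' k, B k := (Summable.tsum_mul_tsum hAsum hBsum hABsum).symm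
    _ ≤ Delta q m * Delta q m := by
        apply mul_le_mul hAt hBt (tsum_nonneg hB0) hDelta0
    _ = Delta q m ^ 2 := (sq (Delta q m)).symm
end
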